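/- arXiv:2403.14535 — 2 statements merged into one kernel-verified Lean document; each statement's English description precedes it below -/
import Mathlib

section
/- The normalized duality gap is a valid progress measure: for a standard-form LP whose saddle-point set Z* is nonempty, for every z ∈ Z and every r > 0 one has ρ_r(z) ≥ 0, and ρ_r(z) = 0 if and only if z ∈ Z* (i.e., z is a saddle point of L over Z). -/
open Matrix Filter

/-- Euclidean norm of a vector in `ℝ^d`. -/
noncomputable def enorm {d : ℕ} (x : Fin d → ℝ) : ℝ := Real.sqrt (x ⬝ᵥ x)

/-- Spectral norm (ℓ₂ operator norm) of a matrix. -/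
noncomputable def specNorm {m n : ℕ} (A : Matrix (Fin m) (Fin n) ℝ) : ℝ :=
  sSup {t | ∃ x : Fin n → ℝ, x ⬝ᵥ x ≤ 1 ∧ t = _root_.enorm (A.mulVec x)}

/-- Componentwise positive part (projection onto the nonnegative orthant). -/
def projPos {d : ℕ} (x : Fin d → ℝ) : Fin d → ℝ := fun i => max (x i) 0

/-- One PDHG iteration with equal primal/dual step size `s`. -/
noncomputable def pdhgT {m n : ℕ} (A : Matrix (Fin m) (Fin n) ℝ) (b : Fin m → ℝ)
    (c : Fin n → ℝ) (s : ℝ) (z : (Fin n → ℝ) × (Fin m → ℝ)) : (Fin n → ℝ) × (Fin m → ℝ) :=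
  let x' := projPos (z.1 + s • Aᵀ.mulVec z.2 - s • c)
  (x', z.2 - s • A.mulVec ((2 : ℝ) • x' - z.1) + s • b)

/-- The Lagrangian `L(x,y) = cᵀx - yᵀAx + bᵀy`. -/
noncomputable def lagr {m n : ℕ} (A : Matrix (Fin m) (Fin n) ℝ) (b : Fin m → ℝ)
    (c : Fin n → ℝ) (x : Fin n → ℝ) (y : Fin m → ℝ) : ℝ :=
  c ⬝ᵥ x - y ⬝ᵥ A.mulVec x + b ⬝ᵥ y

/-- Membership in `Z = ℝ₊ⁿ × ℝᵐ`. -/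
def inZ {m n : ℕ} (z : (Fin n → ℝ) × (Fin m → ℝ)) : Prop := ∀ i, 0 ≤ z.1 i

/-- Saddle point of `L` over `Z`. -/
def isSaddle {m n : ℕ} (A : Matrix (Fin m) (Fin n) ℝ) (b : Fin m → ℝ) (c : Fin n → ℝ)
    (z : (Fin n → ℝ) × (Fin m → ℝ)) : Prop :=
  inZ z ∧ ∀ w : (Fin n → ℝ) × (Fin m → ℝ), inZ w →
    lagr A b c z.1 w.2 ≤ lagr A b c z.1 z.2 ∧ lagr A b c z.1 z.2 ≤ lagr A b c w.1 z.2

/-- The quadratic form `‖z‖²_{P_s}` induced by `P_s = [[(1/s)I, Aᵀ],[A,(1/s)I]]`. -/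
noncomputable def PsSq {m n : ℕ} (A : Matrix (Fin m) (Fin n) ℝ) (s : ℝ)
    (z : (Fin n → ℝ) × (Fin m → ℝ)) : ℝ :=
  (1 / s) * (z.1 ⬝ᵥ z.1 + z.2 ⬝ᵥ z.2) + 2 * (A.mulVec z.1 ⬝ᵥ z.2)

/-- The `P_s` norm. -/
noncomputable def PsNorm {m n : ℕ} (A : Matrix (Fin m) (Fin n) ℝ) (s : ℝ)
    (z : (Fin n → ℝ) × (Fin m → ℝ)) : ℝ := Real.sqrt (PsSq A s z)

/-- Euclidean norm on the primal-dual pair space. -/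
noncomputable def enormP {m n : ℕ} (z : (Fin n → ℝ) × (Fin m → ℝ)) : ℝ :=
  Real.sqrt (z.1 ⬝ᵥ z.1 + z.2 ⬝ᵥ z.2)

/-- Normalized duality gap `ρ_r(z)`. -/
noncomputable def rho {m n : ℕ} (A : Matrix (Fin m) (Fin n) ℝ) (b : Fin m → ℝ)
    (c : Fin n → ℝ) (r : ℝ) (z : (Fin n → ℝ) × (Fin m → ℝ)) : ℝ :=
  (1 / r) * sSup {g | ∃ w : (Fin n → ℝ) × (Fin m → ℝ), inZ w ∧ enormP (w - z) ≤ r ∧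
    g = lagr A b c z.1 w.2 - lagr A b c w.1 z.2}

/-- Euclidean distance to the saddle-point set `Z*`. -/
noncomputable def dist2 {m n : ℕ} (A : Matrix (Fin m) (Fin n) ℝ) (b : Fin m → ℝ)
    (c : Fin n → ℝ) (z : (Fin n → ℝ) × (Fin m → ℝ)) : ℝ :=
  sInf {d | ∃ w, isSaddle A b c w ∧ d = enormP (z - w)}

/-- `P_s`-distance to the saddle-point set `Z*`. -/
noncomputable def distPs {m n : ℕ} (A : Matrix (Fin m) (Fin n) ℝ) (b : Fin m → ℝ)
    (c : Fin n → ℝ) (s : ℝ) (z : (Fin n → ℝ) × (Fin m → ℝ)) : ℝ :=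
  sInf {d | ∃ w, isSaddle A b c w ∧ d = PsNorm A s (z - w)}

/-- `v` is the infimal displacement vector of `T`: the minimum-`P_s`-norm element
of the closure of `range (T - I)`. -/
def isIDV {m n : ℕ} (A : Matrix (Fin m) (Fin n) ℝ) (s : ℝ)
    (T : (Fin n → ℝ) × (Fin m → ℝ) → (Fin n → ℝ) × (Fin m → ℝ))
    (v : (Fin n → ℝ) × (Fin m → ℝ)) : Prop :=
  v ∈ closure {w | ∃ z, w = T z - z} ∧
  ∀ w ∈ closure {w | ∃ z, w = T z - z}, PsNorm A s v ≤ PsNorm A s w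


section Aux
open Matrix

lemma dot_self_nonneg' {d : ℕ} (u : Fin d → ℝ) : 0 ≤ u ⬝ᵥ u :=
  Finset.sum_nonneg (fun _ _ => mul_self_nonneg _)

lemma comp_bound {d : ℕ} (u : Fin d → ℝ) (r : ℝ) (hr : 0 ≤ r) (h : u ⬝ᵥ u ≤ r ^ 2)
    (i : Fin d) : |u i| ≤ r := by
  have h1 : u i * u i ≤ u ⬝ᵥ u := by
    have := Finset.single_le_sum (f := fun j => u j * u j)
      (fun j _ => mul_self_nonneg _) (Finset.mem_univ i)
    simpa [dotProduct] using this
  calc |u i| = Real.sqrt ((u i)^2) := (Real.sqrt_sq_eq_abs _).symm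
    _ ≤ Real.sqrt (r^2) := Real.sqrt_le_sqrt (by nlinarith)
    _ = r := by rw [Real.sqrt_sq hr]

lemma dot_bound {d : ℕ} (v u : Fin d → ℝ) (r : ℝ) (h : ∀ i, |u i| ≤ r) :
    v ⬝ᵥ u ≤ (∑ i, |v i|) * r := by
  rw [Finset.sum_mul, dotProduct]
  refine Finset.sum_le_sum (fun i _ => ?_)
  calc v i * u i ≤ |v i * u i| := le_abs_self _
    _ = |v i| * |u i| := abs_mul _ _
    _ ≤ |v i| * r := mul_le_mul_of_nonneg_left (h i) (abs_nonneg _)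

lemma gap_eq {m n : ℕ} (A : Matrix (Fin m) (Fin n) ℝ) (b : Fin m → ℝ) (c : Fin n → ℝ)
    (z w : (Fin n → ℝ) × (Fin m → ℝ)) :
    lagr A b c z.1 w.2 - lagr A b c w.1 z.2 =
      (A.vecMul z.2 - c) ⬝ᵥ (w.1 - z.1) + (b - A.mulVec z.1) ⬝ᵥ (w.2 - z.2) := by
  have h1 : ∀ u : Fin m → ℝ, u ⬝ᵥ A.mulVec z.1 = A.mulVec z.1 ⬝ᵥ u :=
    fun u => dotProduct_comm _ _
  have h2 : A.vecMul z.2 ⬝ᵥ z.1 = A.mulVec z.1 ⬝ᵥ z.2 := by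
    rw [← Matrix.dotProduct_mulVec, dotProduct_comm]
  simp only [lagr, sub_dotProduct, dotProduct_sub, Matrix.dotProduct_mulVec, h1, h2]
  ring

lemma lagr_gap_affine {m n : ℕ} (A : Matrix (Fin m) (Fin n) ℝ) (b : Fin m → ℝ)
    (c : Fin n → ℝ) (z w : (Fin n → ℝ) × (Fin m → ℝ)) (t : ℝ) :
    lagr A b c z.1 (z.2 + t • (w.2 - z.2)) - lagr A b c (z.1 + t • (w.1 - z.1)) z.2
      = t * (lagr A b c z.1 w.2 - lagr A b c w.1 z.2) := by
  simp only [lagr, dotProduct_add, add_dotProduct, dotProduct_sub, sub_dotProduct,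
    dotProduct_smul, smul_dotProduct, mulVec_add, mulVec_smul, mulVec_sub, smul_eq_mul]
  ring

end Aux

/-- **The normalized duality gap is a valid progress measure**: if `Z* ≠ ∅`, then for
every `z ∈ Z` and `r > 0`, `ρ_r(z) ≥ 0`, and `ρ_r(z) = 0` iff `z` is a saddle point. -/
theorem normalized_duality_gap_valid {m n : ℕ} (A : Matrix (Fin m) (Fin n) ℝ)
    (b : Fin m → ℝ) (c : Fin n → ℝ)
    (hne : ∃ zs : (Fin n → ℝ) × (Fin m → ℝ), isSaddle A b c zs) :
    ∀ z : (Fin n → ℝ) × (Fin m → ℝ), inZ z → ∀ r : ℝ, 0 < r →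
      0 ≤ rho A b c r z ∧ (rho A b c r z = 0 ↔ isSaddle A b c z) := by
  intro z hz r hr
  classical
  set S := {g | ∃ w : (Fin n → ℝ) × (Fin m → ℝ), inZ w ∧ enormP (w - z) ≤ r ∧
    g = lagr A b c z.1 w.2 - lagr A b c w.1 z.2} with hS
  have h0S : (0 : ℝ) ∈ S := by
    refine ⟨z, hz, ?_, by ring⟩
    simp [enormP, hr.le]
  set p := A.vecMul z.2 - c with hp
  set q := b - A.mulVec z.1 with hq
  have hbdd : BddAbove S := by
    refine ⟨(∑ i, |p i|) * r + (∑ j, |q j|) * r, ?_⟩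
    rintro g ⟨w, hw, hwr, rfl⟩
    have hnn : 0 ≤ (w - z).1 ⬝ᵥ (w - z).1 + (w - z).2 ⬝ᵥ (w - z).2 :=
      add_nonneg (dot_self_nonneg' _) (dot_self_nonneg' _)
    have hsq : (w - z).1 ⬝ᵥ (w - z).1 + (w - z).2 ⬝ᵥ (w - z).2 ≤ r ^ 2 := by
      have h2 := Real.sq_sqrt hnn
      have h3 : Real.sqrt ((w - z).1 ⬝ᵥ (w - z).1 + (w - z).2 ⬝ᵥ (w - z).2) ≤ r := hwr
      nlinarith [Real.sqrt_nonneg ((w - z).1 ⬝ᵥ (w - z).1 + (w - z).2 ⬝ᵥ (w - z).2)]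
    have hb1 : ∀ i, |(w - z).1 i| ≤ r :=
      comp_bound _ _ hr.le (by nlinarith [dot_self_nonneg' (w - z).2])
    have hb2 : ∀ j, |(w - z).2 j| ≤ r :=
      comp_bound _ _ hr.le (by nlinarith [dot_self_nonneg' (w - z).1])
    rw [gap_eq]
    have e1 : w.1 - z.1 = (w - z).1 := rfl
    have e2 : w.2 - z.2 = (w - z).2 := rfl
    rw [e1, e2, ← hp, ← hq]
    exact add_le_add (dot_bound _ _ _ hb1) (dot_bound _ _ _ hb2)
  have hsup0 : 0 ≤ sSup S := le_csSup hbdd h0S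
  have hrne : r ≠ 0 := ne_of_gt hr
  have hrhoS : rho A b c r z = (1 / r) * sSup S := by rw [rho, ← hS]
  refine ⟨?_, ?_, ?_⟩
  · rw [hrhoS]
    exact mul_nonneg (by positivity) hsup0
  · intro hrho0
    have hsup : sSup S = 0 := by
      rw [hrhoS] at hrho0
      field_simp at hrho0
      simpa using hrho0
    have hgap : ∀ w : (Fin n → ℝ) × (Fin m → ℝ), inZ w →
        lagr A b c z.1 w.2 - lagr A b c w.1 z.2 ≤ 0 := by
      intro w hw
      set d := enormP (w - z) with hd
      have hd0 : 0 ≤ d := Real.sqrt_nonneg _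
      set t : ℝ := r / (d + r) with ht
      have ht0 : 0 < t := div_pos hr (by linarith)
      have ht1 : t ≤ 1 := by
        rw [ht, div_le_one (by linarith)]; linarith
      set w' : (Fin n → ℝ) × (Fin m → ℝ) :=
        (z.1 + t • (w.1 - z.1), z.2 + t • (w.2 - z.2)) with hw'
      have hw'Z : inZ w' := by
        intro i
        have h1 := hz i
        have h2 := hw i
        have : w'.1 i = (1 - t) * z.1 i + t * w.1 i := by
          simp [hw', Pi.smul_apply, smul_eq_mul]; ring
        rw [this]
        have := mul_nonneg (by linarith : (0:ℝ) ≤ 1 - t) h1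
        have := mul_nonneg ht0.le h2
        linarith
      have hsub : w' - z = (t • (w.1 - z.1), t • (w.2 - z.2)) := by
        ext i <;> simp [hw'] <;> ring
      have hnorm : enormP (w' - z) ≤ r := by
        rw [hsub]
        have : enormP (t • (w.1 - z.1), t • (w.2 - z.2)) = t * d := by
          rw [hd, enormP, enormP]
          have e1 : (t • (w.1 - z.1)) ⬝ᵥ (t • (w.1 - z.1))
              = t ^ 2 * ((w - z).1 ⬝ᵥ (w - z).1) := by
            simp [smul_dotProduct, dotProduct_smul, smul_eq_mul]; ring
          have e2 : (t • (w.2 - z.2)) ⬝ᵥ (t • (w.2 - z.2))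
              = t ^ 2 * ((w - z).2 ⬝ᵥ (w - z).2) := by
            simp [smul_dotProduct, dotProduct_smul, smul_eq_mul]; ring
          rw [e1, e2, ← mul_add, Real.sqrt_mul (sq_nonneg t), Real.sqrt_sq ht0.le]
        rw [this, ht]
        rw [div_mul_eq_mul_div, div_le_iff₀ (by linarith)]
        nlinarith
      have hmem : t * (lagr A b c z.1 w.2 - lagr A b c w.1 z.2) ∈ S :=
        ⟨w', hw'Z, hnorm, (lagr_gap_affine A b c z w t).symm⟩
      have hle := le_csSup hbdd hmem
      rw [hsup] at hle
      nlinarith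
    refine ⟨hz, fun w hw => ⟨?_, ?_⟩⟩
    · have := hgap (z.1, w.2) hz
      simpa using by linarith [this]
    · have := hgap (w.1, z.2) hw
      simpa using by linarith [this]
  · intro hsad
    have hle : ∀ g ∈ S, g ≤ 0 := by
      rintro g ⟨w, hw, -, rfl⟩
      have h := hsad.2 w hw
      linarith [h.1, h.2]
    have : sSup S = 0 := le_antisymm (csSup_le ⟨0, h0S⟩ hle) hsup0
    rw [hrhoS, this, mul_zero]
end

section
/- Behavior of PDHG when both primal and dual are feasible: consider a standard-form LP whose primal and dual are both feasible, and let {z^k = (x^k, y^k)} be the PDHG iterates with step size 0 < s < 1/‖A‖₂ from an arbitrary starting point z⁰. Then the iterates (x^k, y^k) converge to a primal-dual optimal solution z* = (x*, y*) (a saddle point of L over Z), and the infimal displacement vector v of the PDHG operator T satisfies v = T(z*) − z* = 0. -/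
open Matrix Filter

open Finset


section Farkas
variable {V : Type*} [NormedAddCommGroup V] [NormedSpace ℝ V] [FiniteDimensional ℝ V]
variable {ι : Type*} [Fintype ι] [DecidableEq ι]

/-- Conic Carathéodory: any nonnegative combination can be rewritten with
linearly independent support. -/
lemma carath_aux (vs : ι → V) : ∀ (N : ℕ) (u : ι → ℝ),
    (Finset.univ.filter fun i => u i ≠ 0).card ≤ N → (∀ i, 0 ≤ u i) →
    ∃ u' : ι → ℝ, (∀ i, 0 ≤ u' i) ∧ ∑ i, u' i • vs i = ∑ i, u i • vs i ∧
      LinearIndependent ℝ (fun i : {i // u' i ≠ 0} => vs i) := by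
  intro N
  induction N with
  | zero =>
    intro u hcard hu
    refine ⟨u, hu, rfl, ?_⟩
    have hempty : ∀ i : ι, ¬ (u i ≠ 0) := by
      intro i hi
      have : i ∈ Finset.univ.filter fun i => u i ≠ 0 := by simp [hi]
      have := Finset.card_pos.2 ⟨i, this⟩
      omega
    have : IsEmpty {i // u i ≠ 0} := ⟨fun ⟨i, hi⟩ => hempty i hi⟩
    exact linearIndependent_empty_type
  | succ N ih =>
    intro u hcard hu
    by_cases hli : LinearIndependent ℝ (fun i : {i // u i ≠ 0} => vs i)
    · exact ⟨u, hu, rfl, hli⟩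
    · obtain ⟨g, hg0, i₀, hgi₀⟩ := Fintype.not_linearIndependent_iff.1 hli
      -- extend g by zero
      set μ0 : ι → ℝ := fun i => if h : u i ≠ 0 then g ⟨i, h⟩ else 0 with hμ0
      have hμ0supp : ∀ i, μ0 i ≠ 0 → u i ≠ 0 := by
        intro i hi
        by_contra h
        simp [hμ0, h] at hi
      have hμ0sum : ∑ i, μ0 i • vs i = 0 := by
        have h1 : ∑ i, μ0 i • vs i
            = ∑ i ∈ Finset.univ.filter (fun i => u i ≠ 0), μ0 i • vs i := by
          refine (Finset.sum_subset (Finset.subset_univ _) ?_).symm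
          intro i _ hi
          have : ¬ u i ≠ 0 := by simpa using hi
          simp [hμ0, this]
        have h2 : ∑ i ∈ Finset.univ.filter (fun i => u i ≠ 0), μ0 i • vs i
            = ∑ i : {i // u i ≠ 0}, μ0 ↑i • vs ↑i :=
          Finset.sum_subtype _ (by intro x; simp) _
        have h3 : ∑ i : {i // u i ≠ 0}, μ0 ↑i • vs ↑i = ∑ i : {i // u i ≠ 0}, g i • vs ↑i := by
          refine Finset.sum_congr rfl ?_
          rintro ⟨i, hi⟩ _
          simp [hμ0, hi]
        rw [h1, h2, h3, hg0]
      have hμ0ne : μ0 i₀ ≠ 0 := by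
        have : μ0 ↑i₀ = g i₀ := by rcases i₀ with ⟨i, hi⟩; simp [hμ0, hi]
        rw [this]; exact hgi₀
      -- make sure some component is positive
      obtain ⟨μ, hμsupp, hμsum, ⟨iP, hiP⟩⟩ :
          ∃ μ : ι → ℝ, (∀ i, μ i ≠ 0 → u i ≠ 0) ∧ (∑ i, μ i • vs i = 0) ∧ ∃ i, 0 < μ i := by
        rcases lt_or_ge 0 (μ0 i₀) with h | h
        · exact ⟨μ0, hμ0supp, hμ0sum, ⟨i₀, h⟩⟩
        · refine ⟨-μ0, fun i hi => hμ0supp i (by simpa using hi), by simp [hμ0sum], ⟨i₀, ?_⟩⟩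
          have : μ0 ↑i₀ < 0 := lt_of_le_of_ne h hμ0ne
          simpa using this
      set P : Finset ι := Finset.univ.filter fun i => 0 < μ i with hP
      have hPne : P.Nonempty := ⟨iP, by simp [hP, hiP]⟩
      set t : ℝ := P.inf' hPne (fun i => u i / μ i) with ht
      obtain ⟨j₀, hj₀P, hj₀⟩ := Finset.exists_mem_eq_inf' hPne (fun i => u i / μ i)
      have hμj₀ : 0 < μ j₀ := by simpa [hP] using hj₀P
      have htnonneg : 0 ≤ t := by
        rw [ht]
        apply Finset.le_inf'
        intro i hi
        have : 0 < μ i := by simpa [hP] using hi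
        exact div_nonneg (hu i) this.le
      set u'' : ι → ℝ := fun i => u i - t * μ i with hu''
      have hu''nonneg : ∀ i, 0 ≤ u'' i := by
        intro i
        rcases le_or_gt (μ i) 0 with h | h
        · have : t * μ i ≤ 0 := mul_nonpos_of_nonneg_of_nonpos htnonneg h
          simp only [hu'']
          linarith [hu i]
        · have hiP' : i ∈ P := by simp [hP, h]
          have : t ≤ u i / μ i := Finset.inf'_le _ hiP'
          have := (le_div_iff₀ h).1 this
          simp only [hu'']; linarith
      have hu''sum : ∑ i, u'' i • vs i = ∑ i, u i • vs i := by
        simp only [hu'', sub_smul, Finset.sum_sub_distrib, mul_smul]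
        rw [← Finset.smul_sum, hμsum, smul_zero, sub_zero]
      have hu''j₀ : u'' j₀ = 0 := by
        simp only [hu'']
        rw [ht, hj₀]
        field_simp
        ring
      have hsubset : (Finset.univ.filter fun i => u'' i ≠ 0)
          ⊆ (Finset.univ.filter fun i => u i ≠ 0).erase j₀ := by
        intro i hi
        have hi' : u'' i ≠ 0 := by simpa using hi
        have hine : i ≠ j₀ := by
          intro h; rw [h] at hi'; exact hi' hu''j₀
        have hui : u i ≠ 0 := by
          by_contra h'
          have h : u i = 0 := h'
          rcases eq_or_ne (μ i) 0 with hm | hm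
          · exact hi' (by simp [hu'', h, hm])
          · exact hμsupp i hm h
        exact Finset.mem_erase.2 ⟨hine, by simp [hui]⟩
      have hj₀mem : j₀ ∈ (Finset.univ.filter fun i => u i ≠ 0) := by
        have : u j₀ ≠ 0 := hμsupp j₀ (ne_of_gt hμj₀)
        simp [this]
      have hcard' : (Finset.univ.filter fun i => u'' i ≠ 0).card ≤ N := by
        have h1 := Finset.card_le_card hsubset
        have h2 : ((Finset.univ.filter fun i => u i ≠ 0).erase j₀).card
            = (Finset.univ.filter fun i => u i ≠ 0).card - 1 :=
          Finset.card_erase_of_mem hj₀mem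
        have h3 : 1 ≤ (Finset.univ.filter fun i => u i ≠ 0).card :=
          Finset.card_pos.2 ⟨j₀, hj₀mem⟩
        omega
      obtain ⟨u', h1, h2, h3⟩ := ih u'' hcard' hu''nonneg
      exact ⟨u', h1, h2.trans hu''sum, h3⟩

/-- The finitely generated cone. -/
def coneOf (vs : ι → V) : Set V :=
  {w | ∃ u : ι → ℝ, (∀ i, 0 ≤ u i) ∧ w = ∑ i, u i • vs i}

lemma coneOf_closed (vs : ι → V) : IsClosed (coneOf vs) := by
  classical
  -- For an independent finset s, the subcone of combinations supported on s.
  have key : ∀ s : Finset ι, LinearIndependent ℝ (fun i : ↥s => vs ↑i) →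
      IsClosed {w : V | ∃ u : ι → ℝ, (∀ i, 0 ≤ u i) ∧ (∀ i ∉ s, u i = 0) ∧
        w = ∑ i, u i • vs i} := by
    intro s hs
    set φ : (↥s → ℝ) →ₗ[ℝ] V :=
      { toFun := fun v => ∑ j : ↥s, v j • vs ↑j
        map_add' := by intro v w; simp [add_smul, Finset.sum_add_distrib]
        map_smul' := by intro r v; simp [smul_smul, Finset.smul_sum] } with hφ
    have hker : LinearMap.ker φ = ⊥ := by
      rw [LinearMap.ker_eq_bot']
      intro v hv
      have := (Fintype.linearIndependent_iff.1 hs) v hv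
      funext j; exact this j
    have hemb : Topology.IsClosedEmbedding φ := LinearMap.isClosedEmbedding_of_injective hker
    have hclosedset : IsClosed {v : ↥s → ℝ | ∀ j, 0 ≤ v j} := by
      have : {v : ↥s → ℝ | ∀ j, 0 ≤ v j} = ⋂ j, (fun v : ↥s → ℝ => v j) ⁻¹' Set.Ici 0 := by
        ext v; simp [Set.mem_iInter]
      rw [this]
      exact isClosed_iInter fun j => IsClosed.preimage (continuous_apply j) isClosed_Ici
    have himage : {w : V | ∃ u : ι → ℝ, (∀ i, 0 ≤ u i) ∧ (∀ i ∉ s, u i = 0) ∧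
        w = ∑ i, u i • vs i} = φ '' {v : ↥s → ℝ | ∀ j, 0 ≤ v j} := by
      ext w
      constructor
      · rintro ⟨u, hu1, hu2, rfl⟩
        refine ⟨fun j => u ↑j, fun j => hu1 _, ?_⟩
        simp only [hφ, LinearMap.coe_mk, AddHom.coe_mk]
        have e1 : ∑ j : ↥s, u ↑j • vs ↑j = ∑ i ∈ s, u i • vs i :=
          Finset.sum_coe_sort s (fun i => u i • vs i)
        have e2 : ∑ i ∈ s, u i • vs i = ∑ i : ι, u i • vs i :=
          Finset.sum_subset (Finset.subset_univ s) (by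
            intro i _ hi
            rw [hu2 i hi, zero_smul])
        exact e1.trans e2
      · rintro ⟨v, hv, rfl⟩
        refine ⟨fun i => if h : i ∈ s then v ⟨i, h⟩ else 0, ?_, ?_, ?_⟩
        · intro i
          by_cases h : i ∈ s
          · simpa [h] using hv ⟨i, h⟩
          · simp [h]
        · intro i hi; simp [hi]
        · simp only [hφ, LinearMap.coe_mk, AddHom.coe_mk]
          have e1 : ∑ j : ↥s, (if h : (j:ι) ∈ s then v ⟨j, h⟩ else 0) • vs ↑j
              = ∑ i ∈ s, (if h : i ∈ s then v ⟨i, h⟩ else 0) • vs i :=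
            Finset.sum_coe_sort s (fun i => (if h : i ∈ s then v ⟨i, h⟩ else 0) • vs i)
          have e2 : ∑ i ∈ s, (if h : i ∈ s then v ⟨i, h⟩ else 0) • vs i
              = ∑ i : ι, (if h : i ∈ s then v ⟨i, h⟩ else 0) • vs i :=
            Finset.sum_subset (Finset.subset_univ s) (by
              intro i _ hi
              rw [dif_neg hi, zero_smul])
          rw [← e2, ← e1]
          refine Finset.sum_congr rfl ?_
          rintro ⟨i, hi⟩ _
          simp [hi]
    rw [himage]
    exact hemb.isClosedMap _ hclosedset
  -- the full cone is a finite union of such subcones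
  have hunion : coneOf vs = ⋃ s : {s : Finset ι // LinearIndependent ℝ (fun i : ↥s => vs ↑i)},
      {w : V | ∃ u : ι → ℝ, (∀ i, 0 ≤ u i) ∧ (∀ i ∉ (s : Finset ι), u i = 0) ∧
        w = ∑ i, u i • vs i} := by
    ext w
    constructor
    · rintro ⟨u, hu, rfl⟩
      obtain ⟨u', h1, h2, h3⟩ := carath_aux vs (Finset.univ.filter fun i => u i ≠ 0).card u
        le_rfl hu
      set s : Finset ι := Finset.univ.filter fun i => u' i ≠ 0 with hsdef
      have hmem : ∀ i : ι, i ∈ s ↔ u' i ≠ 0 := by intro i; simp [hsdef]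
      have hind : LinearIndependent ℝ (fun i : ↥s => vs ↑i) := by
        have hginj : Function.Injective
            (fun i : ↥s => (⟨↑i, (hmem ↑i).1 i.2⟩ : {i // u' i ≠ 0})) :=
          fun a b hab => Subtype.ext (congrArg Subtype.val hab :)
        exact h3.comp _ hginj
      refine Set.mem_iUnion.2 ⟨⟨s, hind⟩, u', h1, ?_, h2.symm⟩
      intro i hi
      by_contra h
      exact hi ((hmem i).2 h)
    · intro hw
      obtain ⟨s, u, hu, _, rfl⟩ := Set.mem_iUnion.1 hw
      exact ⟨u, hu, rfl⟩
  rw [hunion]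
  exact isClosed_iUnion_of_finite fun s => key s s.2

lemma coneOf_convex (vs : ι → V) : Convex ℝ (coneOf vs) := by
  rintro x ⟨u, hu, rfl⟩ y ⟨v, hv, rfl⟩ a b ha hb _
  refine ⟨fun i => a * u i + b * v i,
    fun i => add_nonneg (mul_nonneg ha (hu i)) (mul_nonneg hb (hv i)), ?_⟩
  simp [add_smul, Finset.sum_add_distrib, mul_smul, Finset.smul_sum]

lemma coneOf_smul (vs : ι → V) {x : V} (hx : x ∈ coneOf vs) {t : ℝ} (ht : 0 ≤ t) :
    t • x ∈ coneOf vs := by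
  obtain ⟨u, hu, rfl⟩ := hx
  exact ⟨fun i => t * u i, fun i => mul_nonneg ht (hu i), by
    simp [Finset.smul_sum, mul_smul]⟩

/-- **Farkas' lemma**, functional form. -/
theorem farkas (vs : ι → V) (q : V)
    (h : ¬ ∃ u : ι → ℝ, (∀ i, 0 ≤ u i) ∧ ∑ i, u i • vs i = q) :
    ∃ f : V →L[ℝ] ℝ, (∀ i, f (vs i) ≤ 0) ∧ 0 < f q := by
  have hq : q ∉ coneOf vs := by
    intro ⟨u, hu, hq⟩
    exact h ⟨u, hu, hq.symm⟩
  obtain ⟨f, u, hfu, huq⟩ :=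
    geometric_hahn_banach_closed_point (coneOf_convex vs) (coneOf_closed vs) hq
  have h0 : (0 : V) ∈ coneOf vs := ⟨fun _ => 0, fun _ => le_rfl, by simp⟩
  have hu0 : 0 < u := by simpa using hfu 0 h0
  have hle : ∀ x ∈ coneOf vs, f x ≤ 0 := by
    intro x hx
    by_contra hpos
    push_neg at hpos
    have ht : (0 : ℝ) ≤ (u + 1) / f x := div_nonneg (by linarith) hpos.le
    have h1 := hfu _ (coneOf_smul vs hx ht)
    have h2 : f (((u + 1) / f x) • x) = ((u + 1) / f x) * f x := by
      simp
    rw [h2, div_mul_cancel₀ _ (ne_of_gt hpos)] at h1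
    linarith
  refine ⟨f, fun i => hle _ ⟨fun j => if j = i then 1 else 0,
    fun j => by by_cases hji : j = i <;> simp [hji], ?_⟩, lt_trans hu0 huq⟩
  simp

section Duality
variable {m n : ℕ}

lemma weak_duality (A : Matrix (Fin m) (Fin n) ℝ) (b : Fin m → ℝ) (c : Fin n → ℝ)
    {x : Fin n → ℝ} {y : Fin m → ℝ} (hx : ∀ i, 0 ≤ x i) (hAx : A.mulVec x = b)
    (hy : ∀ j, Aᵀ.mulVec y j ≤ c j) : b ⬝ᵥ y ≤ c ⬝ᵥ x := by
  have h1 : b ⬝ᵥ y = Aᵀ.mulVec y ⬝ᵥ x := by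
    rw [← hAx, dotProduct_comm, Matrix.dotProduct_mulVec, ← Matrix.mulVec_transpose,
      dotProduct_comm]
  rw [h1]
  refine Finset.sum_le_sum fun j _ => ?_
  exact mul_le_mul_of_nonneg_right (hy j) (hx j)

lemma sum_single_smul {k : ℕ} (a : Fin k → ℝ) :
    ∑ i, a i • (Pi.single i 1 : Fin k → ℝ) = a := by
  funext i'
  rw [Finset.sum_apply]
  simp [Pi.single_apply, Finset.sum_ite_eq]

/-- Existence of an optimal primal-dual pair (strong duality). -/
lemma exists_optimal_pair (A : Matrix (Fin m) (Fin n) ℝ) (b : Fin m → ℝ) (c : Fin n → ℝ)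
    (hprimal : ∃ x : Fin n → ℝ, (∀ i, 0 ≤ x i) ∧ A.mulVec x = b)
    (hdual : ∃ y : Fin m → ℝ, ∀ j, Aᵀ.mulVec y j ≤ c j) :
    ∃ x y, (∀ i, 0 ≤ x i) ∧ A.mulVec x = b ∧ (∀ j, Aᵀ.mulVec y j ≤ c j) ∧
      c ⬝ᵥ x = b ⬝ᵥ y := by
  classical
  set e1 : Fin m → ((Fin m → ℝ) × (Fin n → ℝ) × ℝ) := fun i => ((Pi.single i 1 : Fin m → ℝ), 0, 0) with he1
  set e2 : Fin n → ((Fin m → ℝ) × (Fin n → ℝ) × ℝ) := fun j => (0, (Pi.single j 1 : Fin n → ℝ), 0) with he2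
  set e3 : ((Fin m → ℝ) × (Fin n → ℝ) × ℝ) := (0, 0, 1) with he3
  have hdecomp : ∀ (a : Fin m → ℝ) (d : Fin n → ℝ) (t : ℝ),
      (⟨a, d, t⟩ : (Fin m → ℝ) × (Fin n → ℝ) × ℝ) = ∑ i, a i • e1 i + ∑ j, d j • e2 j + t • e3 := by
    intro a d t
    have h1 : (∑ i, a i • e1 i) = (⟨a, 0, 0⟩ : (Fin m → ℝ) × (Fin n → ℝ) × ℝ) := by
      rw [Prod.ext_iff, Prod.ext_iff]
      refine ⟨?_, ?_, ?_⟩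
      · simp only [he1, Prod.fst_sum, Prod.smul_fst]
        exact sum_single_smul a
      · simp [he1, Prod.snd_sum, Prod.fst_sum]
      · simp [he1, Prod.snd_sum]
    have h2 : (∑ j, d j • e2 j) = (⟨0, d, 0⟩ : (Fin m → ℝ) × (Fin n → ℝ) × ℝ) := by
      rw [Prod.ext_iff, Prod.ext_iff]
      refine ⟨?_, ?_, ?_⟩
      · simp [he2, Prod.fst_sum]
      · simp only [he2, Prod.snd_sum, Prod.fst_sum, Prod.smul_snd, Prod.smul_fst]
        exact sum_single_smul d
      · simp [he2, Prod.snd_sum]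
    rw [h1, h2, he3]
    rw [Prod.ext_iff, Prod.ext_iff]
    refine ⟨by simp, by simp, by simp⟩
  -- generators
  set vs : (Fin n ⊕ (Fin m ⊕ (Fin m ⊕ (Fin n ⊕ Unit)))) → ((Fin m → ℝ) × (Fin n → ℝ) × ℝ) :=
    Sum.elim (fun j => ((fun i => A i j), 0, c j))
      (Sum.elim (fun i => (0, (fun j => A i j), -(b i)))
        (Sum.elim (fun i => (0, (fun j => -(A i j)), b i))
          (Sum.elim (fun j => (0, (Pi.single j 1 : Fin n → ℝ), 0))
            (fun _ => (0, 0, 1))))) with hvs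
  set q : ((Fin m → ℝ) × (Fin n → ℝ) × ℝ) := (b, c, 0) with hq
  by_cases hsolv : ∃ u : (Fin n ⊕ (Fin m ⊕ (Fin m ⊕ (Fin n ⊕ Unit)))) → ℝ,
      (∀ i, 0 ≤ u i) ∧ ∑ i, u i • vs i = q
  · -- primal-dual system is solvable
    obtain ⟨u, hu, hsum⟩ := hsolv
    set x : Fin n → ℝ := fun j => u (Sum.inl j) with hx
    set y1 : Fin m → ℝ := fun i => u (Sum.inr (Sum.inl i)) with hy1
    set y2 : Fin m → ℝ := fun i => u (Sum.inr (Sum.inr (Sum.inl i))) with hy2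
    set sl : Fin n → ℝ := fun j => u (Sum.inr (Sum.inr (Sum.inr (Sum.inl j)))) with hsl
    set tt : ℝ := u (Sum.inr (Sum.inr (Sum.inr (Sum.inr ())))) with htt
    set y : Fin m → ℝ := fun i => y1 i - y2 i with hy
    -- component equations
    have hsum1 : ∀ i', ∑ i, u i * (vs i).1 i' = b i' := by
      intro i'
      have h := congrFun (congrArg (fun v : (Fin m → ℝ) × (Fin n → ℝ) × ℝ => v.1) hsum) i'
      simpa [Prod.fst_sum, Finset.sum_apply] using h
    have hsum2 : ∀ j', ∑ i, u i * (vs i).2.1 j' = c j' := by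
      intro j'
      have h := congrFun (congrArg (fun v : (Fin m → ℝ) × (Fin n → ℝ) × ℝ => v.2.1) hsum) j'
      simpa [Prod.snd_sum, Prod.fst_sum, Finset.sum_apply] using h
    have hsum3 : ∑ i, u i * (vs i).2.2 = 0 := by
      have h := congrArg (fun v : (Fin m → ℝ) × (Fin n → ℝ) × ℝ => v.2.2) hsum
      simpa [Prod.snd_sum] using h
    have heq1 : ∀ i', ∑ j, x j * A i' j = b i' := by
      intro i'
      have h := hsum1 i'
      rw [Fintype.sum_sum_type, Fintype.sum_sum_type, Fintype.sum_sum_type,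
        Fintype.sum_sum_type] at h
      simpa [hvs] using h
    have heq2 : ∀ j', ∑ i, y1 i * A i j' - ∑ i, y2 i * A i j' + sl j' = c j' := by
      intro j'
      have h := hsum2 j'
      rw [Fintype.sum_sum_type, Fintype.sum_sum_type, Fintype.sum_sum_type,
        Fintype.sum_sum_type] at h
      simp only [hvs, Sum.elim_inl, Sum.elim_inr] at h
      simp only [Pi.single_apply, mul_ite, mul_one, mul_zero, Finset.sum_ite_eq] at h
      simp [mul_comm, Finset.sum_sub_distrib, sub_eq_add_neg, Finset.sum_neg_distrib] at h ⊢
      linarith [h]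
    have heq3 : ∑ j, x j * c j - ∑ i, y1 i * b i + ∑ i, y2 i * b i + tt = 0 := by
      have h := hsum3
      rw [Fintype.sum_sum_type, Fintype.sum_sum_type, Fintype.sum_sum_type,
        Fintype.sum_sum_type] at h
      simp only [hvs, Sum.elim_inl, Sum.elim_inr] at h
      simp only [mul_neg, mul_zero, mul_one, Finset.sum_const_zero, add_zero,
        Finset.sum_neg_distrib, Finset.sum_fin_eq_sum_range] at h ⊢
      simp at h
      linarith [h]
    have hxnn : ∀ j, 0 ≤ x j := fun j => hu _
    have hAx : A.mulVec x = b := by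
      funext i'
      rw [Matrix.mulVec, dotProduct]
      rw [← heq1 i']
      exact Finset.sum_congr rfl fun j _ => mul_comm _ _
    have hAty : ∀ j, Aᵀ.mulVec y j ≤ c j := by
      intro j'
      have h := heq2 j'
      have hsl' : 0 ≤ sl j' := hu _
      have : Aᵀ.mulVec y j' = ∑ i, y1 i * A i j' - ∑ i, y2 i * A i j' := by
        rw [Matrix.mulVec, dotProduct]
        simp only [Matrix.transpose_apply, hy]
        rw [← Finset.sum_sub_distrib]
        exact Finset.sum_congr rfl fun i _ => by ring
      rw [this]
      linarith
    have hcx : c ⬝ᵥ x ≤ b ⬝ᵥ y := by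
      have httnn : 0 ≤ tt := hu _
      have h1 : c ⬝ᵥ x = ∑ j, x j * c j := by
        rw [dotProduct]; exact Finset.sum_congr rfl fun j _ => mul_comm _ _
      have h2 : b ⬝ᵥ y = ∑ i, y1 i * b i - ∑ i, y2 i * b i := by
        rw [dotProduct]
        simp only [hy]
        rw [← Finset.sum_sub_distrib]
        exact Finset.sum_congr rfl fun i _ => by ring
      rw [h1, h2]
      linarith
    have hwd := weak_duality A b c hxnn hAx hAty
    exact ⟨x, y, hxnn, hAx, hAty, le_antisymm hcx hwd⟩
  · -- infeasible: Farkas gives a contradiction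
    exfalso
    obtain ⟨f, hf, hfq⟩ := farkas vs q hsolv
    set β : Fin m → ℝ := fun i => f (e1 i) with hβ
    set γ : Fin n → ℝ := fun j => f (e2 j) with hγ
    set δ : ℝ := f e3 with hδ
    have hfval : ∀ (a : Fin m → ℝ) (d : Fin n → ℝ) (t : ℝ),
        f (⟨a, d, t⟩ : (Fin m → ℝ) × (Fin n → ℝ) × ℝ) = a ⬝ᵥ β + d ⬝ᵥ γ + t * δ := by
      intro a d t
      rw [hdecomp a d t]
      rw [map_add, map_add, map_sum, map_sum]
      simp only [_root_.map_smul, smul_eq_mul]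
      rfl
    have hxcol : ∀ j, (∑ i, A i j * β i) + c j * δ ≤ 0 := by
      intro j
      have h := hf (Sum.inl j)
      rw [hvs] at h
      simp only [Sum.elim_inl] at h
      rw [hfval] at h
      simpa [dotProduct, mul_comm] using h
    have hrow : ∀ i, (∑ j, A i j * γ j) = b i * δ := by
      intro i
      have h1 := hf (Sum.inr (Sum.inl i))
      have h2 := hf (Sum.inr (Sum.inr (Sum.inl i)))
      rw [hvs] at h1 h2
      simp only [Sum.elim_inl, Sum.elim_inr] at h1 h2
      rw [hfval] at h1
      rw [hfval] at h2
      simp only [zero_dotProduct, dotProduct, Pi.zero_apply, zero_mul, Finset.sum_const_zero,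
        zero_add, neg_mul, mul_neg, Finset.sum_neg_distrib, add_zero] at h1 h2
      linarith [h1, h2]
    have hγnp : ∀ j, γ j ≤ 0 := by
      intro j
      have h := hf (Sum.inr (Sum.inr (Sum.inr (Sum.inl j))))
      rw [hvs] at h
      simp only [Sum.elim_inr, Sum.elim_inl] at h
      rw [hfval] at h
      simpa [dotProduct, Pi.single_apply, Finset.sum_ite_eq] using h
    have hδnp : δ ≤ 0 := by
      have h := hf (Sum.inr (Sum.inr (Sum.inr (Sum.inr ()))))
      rw [hvs] at h
      simp only [Sum.elim_inr] at h
      rw [hfval] at h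
      simpa using h
    have hqpos : 0 < b ⬝ᵥ β + c ⬝ᵥ γ := by
      have h := hfq
      rw [hq, hfval] at h
      simpa using h
    obtain ⟨x0, hx0, hAx0⟩ := hprimal
    obtain ⟨y0, hy0⟩ := hdual
    rcases eq_or_lt_of_le hδnp with hδ0 | hδneg
    · -- δ = 0
      have hbβ : b ⬝ᵥ β ≤ 0 := by
        have : b ⬝ᵥ β = ∑ j, (∑ i, A i j * β i) * x0 j := by
          rw [← hAx0, dotProduct_comm, Matrix.dotProduct_mulVec, dotProduct]
          refine Finset.sum_congr rfl fun j _ => ?_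
          rw [Matrix.vecMul, dotProduct]
          congr 1
          exact Finset.sum_congr rfl fun i _ => mul_comm _ _
        rw [this]
        refine Finset.sum_nonpos fun j _ => ?_
        have hthis := hxcol j
        rw [hδ0] at hthis
        simp only [mul_zero, add_zero] at hthis
        exact mul_nonpos_of_nonpos_of_nonneg hthis (hx0 j)
      have hcγ : c ⬝ᵥ γ ≤ 0 := by
        have h1 : c ⬝ᵥ γ ≤ Aᵀ.mulVec y0 ⬝ᵥ γ := by
          rw [dotProduct, dotProduct]
          refine Finset.sum_le_sum fun j _ => ?_
          have := hγnp j
          nlinarith [hy0 j, hγnp j]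
        have h2 : Aᵀ.mulVec y0 ⬝ᵥ γ = 0 := by
          rw [dotProduct]
          have : ∀ j, Aᵀ.mulVec y0 j * γ j = ∑ i, y0 i * (A i j * γ j) := by
            intro j
            rw [Matrix.mulVec, dotProduct, Finset.sum_mul]
            exact Finset.sum_congr rfl fun i _ => by
              simp [Matrix.transpose_apply]; ring
          rw [Finset.sum_congr rfl fun j _ => this j, Finset.sum_comm]
          have : ∀ i, ∑ j, y0 i * (A i j * γ j) = y0 i * (b i * δ) := by
            intro i
            rw [← Finset.mul_sum, hrow i]
          rw [Finset.sum_congr rfl fun i _ => this i, hδ0]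
          simp
        linarith
      linarith
    · -- δ < 0
      set xbar : Fin n → ℝ := fun j => γ j / δ with hxbar
      set ybar : Fin m → ℝ := fun i => β i / (-δ) with hybar
      have hδne : δ ≠ 0 := ne_of_lt hδneg
      have hxbarnn : ∀ j, 0 ≤ xbar j := fun j => by
        rw [hxbar]
        rw [div_nonneg_iff]
        exact Or.inr ⟨hγnp j, hδneg.le⟩
      have hAxbar : A.mulVec xbar = b := by
        funext i
        rw [Matrix.mulVec, dotProduct]
        have : ∑ j, A i j * xbar j = (∑ j, A i j * γ j) / δ := by
          rw [Finset.sum_div]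
          exact Finset.sum_congr rfl fun j _ => by rw [hxbar]; ring
        rw [this, hrow i, mul_div_assoc, div_self (ne_of_lt hδneg), mul_one]
      have hAtybar : ∀ j, Aᵀ.mulVec ybar j ≤ c j := by
        intro j
        rw [Matrix.mulVec, dotProduct]
        have h1 : ∑ i, Aᵀ j i * ybar i = (∑ i, A i j * β i) / (-δ) := by
          rw [Finset.sum_div]
          exact Finset.sum_congr rfl fun i _ => by
            simp only [Matrix.transpose_apply, hybar]; ring
        rw [h1]
        rw [div_le_iff₀ (by linarith : (0:ℝ) < -δ)]
        have := hxcol j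
        nlinarith
      have hwd := weak_duality A b c hxbarnn hAxbar hAtybar
      -- 0 < bᵀβ + cᵀγ = (-δ)(bᵀybar - cᵀxbar)
      have hβrw : b ⬝ᵥ β = (-δ) * (b ⬝ᵥ ybar) := by
        rw [dotProduct, dotProduct, Finset.mul_sum]
        exact Finset.sum_congr rfl fun i _ => by
          rw [hybar]; field_simp
      have hγrw : c ⬝ᵥ γ = δ * (c ⬝ᵥ xbar) := by
        rw [dotProduct, dotProduct, Finset.mul_sum]
        exact Finset.sum_congr rfl fun j _ => by
          rw [hxbar]; field_simp
      rw [hβrw, hγrw] at hqpos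
      nlinarith

end Duality



section PDHGAnalysis

variable {m n : ℕ}

lemma dotProduct_self_nonneg' {d : ℕ} (v : Fin d → ℝ) : 0 ≤ v ⬝ᵥ v :=
  Finset.sum_nonneg fun i _ => mul_self_nonneg (v i)

lemma eq_zero_of_dotProduct_self {d : ℕ} (v : Fin d → ℝ) (h : v ⬝ᵥ v ≤ 0) : v = 0 := by
  have h0 : v ⬝ᵥ v = 0 := le_antisymm h (dotProduct_self_nonneg' v)
  funext i
  have := (Finset.sum_eq_zero_iff_of_nonneg
    (fun i (_ : i ∈ Finset.univ) => mul_self_nonneg (v i))).1 h0 i (Finset.mem_univ i)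
  exact mul_self_eq_zero.1 this

lemma enorm_nonneg {d : ℕ} (v : Fin d → ℝ) : 0 ≤ _root_.enorm v := Real.sqrt_nonneg _

lemma enorm_sq {d : ℕ} (v : Fin d → ℝ) : _root_.enorm v * _root_.enorm v = v ⬝ᵥ v :=
  Real.mul_self_sqrt (dotProduct_self_nonneg' v)

lemma abs_dotProduct_le {d : ℕ} (u v : Fin d → ℝ) : |u ⬝ᵥ v| ≤ _root_.enorm u * _root_.enorm v := by
  have h1 : (u ⬝ᵥ v) ^ 2 ≤ (u ⬝ᵥ u) * (v ⬝ᵥ v) := by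
    have := Finset.sum_mul_sq_le_sq_mul_sq Finset.univ u v
    simpa [dotProduct, sq] using this
  have h2 : |u ⬝ᵥ v| = Real.sqrt ((u ⬝ᵥ v) ^ 2) := (Real.sqrt_sq_eq_abs _).symm
  rw [h2]
  unfold _root_.enorm
  rw [← Real.sqrt_mul (dotProduct_self_nonneg' u)]
  exact Real.sqrt_le_sqrt h1

lemma enorm_smul' {d : ℕ} (t : ℝ) (v : Fin d → ℝ) : _root_.enorm (t • v) = |t| * _root_.enorm v := by
  unfold _root_.enorm
  have h1 : (t • v) ⬝ᵥ (t • v) = |t| * |t| * (v ⬝ᵥ v) := by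
    have : (t • v) ⬝ᵥ (t • v) = t * t * (v ⬝ᵥ v) := by
      simp [smul_dotProduct, dotProduct_smul, smul_eq_mul]; ring
    rw [this, ← abs_mul_abs_self]
  rw [h1, Real.sqrt_mul (mul_nonneg (abs_nonneg t) (abs_nonneg t)),
    Real.sqrt_mul_self (abs_nonneg t)]

lemma specNorm_bddAbove (A : Matrix (Fin m) (Fin n) ℝ) :
    BddAbove {t | ∃ x : Fin n → ℝ, x ⬝ᵥ x ≤ 1 ∧ t = _root_.enorm (A.mulVec x)} := by
  refine ⟨Real.sqrt (∑ i, ∑ j, A i j ^ 2), ?_⟩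
  rintro t ⟨x, hx, rfl⟩
  unfold _root_.enorm
  apply Real.sqrt_le_sqrt
  have hterm : ∀ i, A.mulVec x i * A.mulVec x i ≤ ∑ j, A i j ^ 2 := by
    intro i
    have h1 : (∑ j, A i j * x j) ^ 2 ≤ (∑ j, A i j ^ 2) * (∑ j, x j ^ 2) :=
      Finset.sum_mul_sq_le_sq_mul_sq Finset.univ _ _
    have h2 : (∑ j, x j ^ 2) ≤ 1 := by simpa [dotProduct, sq] using hx
    have h3 : (0:ℝ) ≤ ∑ j, A i j ^ 2 := Finset.sum_nonneg fun j _ => sq_nonneg _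
    have h4 : A.mulVec x i * A.mulVec x i = (∑ j, A i j * x j) ^ 2 := by
      rw [Matrix.mulVec, dotProduct, sq]
    nlinarith
  calc A.mulVec x ⬝ᵥ A.mulVec x = ∑ i, A.mulVec x i * A.mulVec x i := rfl
    _ ≤ ∑ i, ∑ j, A i j ^ 2 := Finset.sum_le_sum fun i _ => hterm i

lemma specNorm_nonneg (A : Matrix (Fin m) (Fin n) ℝ) : 0 ≤ specNorm A := by
  have h0 : (0:ℝ) ∈ {t | ∃ x : Fin n → ℝ, x ⬝ᵥ x ≤ 1 ∧ t = _root_.enorm (A.mulVec x)} := by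
    refine ⟨0, by simp [dotProduct], ?_⟩
    simp [Matrix.mulVec_zero, _root_.enorm, dotProduct]
  exact le_csSup (specNorm_bddAbove A) h0

lemma enorm_mulVec_le (A : Matrix (Fin m) (Fin n) ℝ) (x : Fin n → ℝ) :
    _root_.enorm (A.mulVec x) ≤ specNorm A * _root_.enorm x := by
  rcases eq_or_lt_of_le (enorm_nonneg x) with h0 | hpos
  · have hx0 : x = 0 := by
      apply eq_zero_of_dotProduct_self
      have : Real.sqrt (x ⬝ᵥ x) = 0 := h0.symm
      exact Real.sqrt_eq_zero'.1 this
    rw [hx0]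
    simp [Matrix.mulVec_zero, _root_.enorm, dotProduct]
  · set e := _root_.enorm x with he
    have hxhat : ((e⁻¹ • x) ⬝ᵥ (e⁻¹ • x)) ≤ 1 := by
      have h1 : (e⁻¹ • x) ⬝ᵥ (e⁻¹ • x) = _root_.enorm (e⁻¹ • x) * _root_.enorm (e⁻¹ • x) :=
        (enorm_sq _).symm
      have h2 : _root_.enorm (e⁻¹ • x) = 1 := by
        rw [enorm_smul', abs_of_pos (inv_pos.2 hpos), ← he, inv_mul_cancel₀ (ne_of_gt hpos)]
      rw [h1, h2]; norm_num
    have hmem : _root_.enorm (A.mulVec (e⁻¹ • x)) ∈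
        {t | ∃ x : Fin n → ℝ, x ⬝ᵥ x ≤ 1 ∧ t = _root_.enorm (A.mulVec x)} :=
      ⟨e⁻¹ • x, hxhat, rfl⟩
    have hle : _root_.enorm (A.mulVec (e⁻¹ • x)) ≤ specNorm A :=
      le_csSup (specNorm_bddAbove A) hmem
    rw [Matrix.mulVec_smul, enorm_smul', abs_of_pos (inv_pos.2 hpos)] at hle
    rw [mul_comm (specNorm A) e]
    calc _root_.enorm (A.mulVec x) = e * (e⁻¹ * _root_.enorm (A.mulVec x)) := by
          field_simp
      _ ≤ e * specNorm A := by
          apply mul_le_mul_of_nonneg_left hle hpos.le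
      _ = e * specNorm A := rfl

lemma psSq_lower {A : Matrix (Fin m) (Fin n) ℝ} {s : ℝ}
    (z : (Fin n → ℝ) × (Fin m → ℝ)) :
    (1/s - specNorm A) * (z.1 ⬝ᵥ z.1 + z.2 ⬝ᵥ z.2) ≤ PsSq A s z := by
  have h1 : |A.mulVec z.1 ⬝ᵥ z.2| ≤ specNorm A * _root_.enorm z.1 * _root_.enorm z.2 := by
    calc |A.mulVec z.1 ⬝ᵥ z.2| ≤ _root_.enorm (A.mulVec z.1) * _root_.enorm z.2 := abs_dotProduct_le _ _
      _ ≤ specNorm A * _root_.enorm z.1 * _root_.enorm z.2 :=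
        mul_le_mul_of_nonneg_right (enorm_mulVec_le A z.1) (enorm_nonneg _)
  have h2 : 2 * (_root_.enorm z.1 * _root_.enorm z.2) ≤ z.1 ⬝ᵥ z.1 + z.2 ⬝ᵥ z.2 := by
    nlinarith [enorm_sq z.1, enorm_sq z.2, sq_nonneg (_root_.enorm z.1 - _root_.enorm z.2)]
  have h3 := specNorm_nonneg A
  have h4 := neg_abs_le (A.mulVec z.1 ⬝ᵥ z.2)
  have h5 := mul_le_mul_of_nonneg_left h2 h3
  have h6 := enorm_nonneg z.1
  have h7 := enorm_nonneg z.2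
  simp only [PsSq]
  nlinarith [h1, h4, h5]

/-- The `P_s` bilinear form. -/
noncomputable def psBil (A : Matrix (Fin m) (Fin n) ℝ) (s : ℝ)
    (z w : (Fin n → ℝ) × (Fin m → ℝ)) : ℝ :=
  1/s * (z.1 ⬝ᵥ w.1 + z.2 ⬝ᵥ w.2) + A.mulVec z.1 ⬝ᵥ w.2 + A.mulVec w.1 ⬝ᵥ z.2

lemma psSq_add (A : Matrix (Fin m) (Fin n) ℝ) (s : ℝ) (a e : (Fin n → ℝ) × (Fin m → ℝ)) :
    PsSq A s (a + e) = PsSq A s a + 2 * psBil A s a e + PsSq A s e := by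
  simp only [PsSq, psBil, Prod.fst_add, Prod.snd_add, Matrix.mulVec_add,
    add_dotProduct, dotProduct_add]
  rw [dotProduct_comm e.1 a.1, dotProduct_comm e.2 a.2]
  ring

lemma projPos_vi {d : ℕ} (a u : Fin d → ℝ) (hu : ∀ i, 0 ≤ u i) :
    (a - projPos a) ⬝ᵥ (u - projPos a) ≤ 0 := by
  refine Finset.sum_nonpos fun i _ => ?_
  simp only [Pi.sub_apply, projPos]
  rcases le_or_gt (a i) 0 with h | h
  · rw [max_eq_right h]
    simpa using mul_nonpos_of_nonpos_of_nonneg h (hu i)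
  · rw [max_eq_left h.le]
    simp

lemma tdot (A : Matrix (Fin m) (Fin n) ℝ) (g : Fin n → ℝ) (w : Fin m → ℝ) :
    A.mulVec g ⬝ᵥ w = Aᵀ.mulVec w ⬝ᵥ g := by
  rw [dotProduct_comm, Matrix.dotProduct_mulVec, Matrix.mulVec_transpose]

lemma pdhg_firm {A : Matrix (Fin m) (Fin n) ℝ} {b : Fin m → ℝ} {c : Fin n → ℝ} {s : ℝ}
    (hs : 0 < s) (z w : (Fin n → ℝ) × (Fin m → ℝ)) :
    0 ≤ psBil A s (z - pdhgT A b c s z - (w - pdhgT A b c s w))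
      (pdhgT A b c s z - pdhgT A b c s w) := by
  obtain ⟨x, y⟩ := z
  obtain ⟨u, v⟩ := w
  set p := x + s • Aᵀ.mulVec y - s • c with hp
  set q := u + s • Aᵀ.mulVec v - s • c with hq
  set x' := projPos p with hx'
  set u' := projPos q with hu'
  set Y' := y - s • A.mulVec ((2:ℝ) • x' - x) + s • b with hY'
  set V' := v - s • A.mulVec ((2:ℝ) • u' - u) + s • b with hV'
  have hTz : pdhgT A b c s (x, y) = (x', Y') := rfl
  have hTw : pdhgT A b c s (u, v) = (u', V') := rfl
  rw [hTz, hTw]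
  have hB : (y - Y') - (v - V') = s • A.mulVec ((2:ℝ) • (x' - u') - (x - u)) := by
    rw [hY', hV']
    simp only [Matrix.mulVec_sub, Matrix.mulVec_smul, smul_sub]
    module
  have hs' : s ≠ 0 := ne_of_gt hs
  -- scalar identities
  have e1 : ((y - Y') - (v - V')) ⬝ᵥ (Y' - V')
      = s * (A.mulVec ((2:ℝ) • (x' - u') - (x - u)) ⬝ᵥ (Y' - V')) := by
    rw [hB, smul_dotProduct, smul_eq_mul]
  have e3expand : A.mulVec ((2:ℝ) • (x' - u') - (x - u)) ⬝ᵥ (Y' - V')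
      = 2 * (A.mulVec (x' - u') ⬝ᵥ (Y' - V')) - A.mulVec (x - u) ⬝ᵥ (Y' - V') := by
    rw [Matrix.mulVec_sub, Matrix.mulVec_smul, sub_dotProduct, smul_dotProduct,
      smul_eq_mul]
  have e2 : A.mulVec ((x - x') - (u - u')) ⬝ᵥ (Y' - V')
      = A.mulVec (x - u) ⬝ᵥ (Y' - V') - A.mulVec (x' - u') ⬝ᵥ (Y' - V') := by
    have hxx : (x - x') - (u - u') = (x - u) - (x' - u') := by abel
    rw [hxx, Matrix.mulVec_sub, sub_dotProduct]
  have e3 : A.mulVec (x' - u') ⬝ᵥ (Y' - V') + A.mulVec (x' - u') ⬝ᵥ ((y - Y') - (v - V'))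
      = A.mulVec (x' - u') ⬝ᵥ (y - v) := by
    rw [← dotProduct_add,
      show (Y' - V') + ((y - Y') - (v - V')) = y - v from by abel]
  have e4 : ((x - x') - (u - u')) ⬝ᵥ (x' - u') + s * (A.mulVec (x' - u') ⬝ᵥ (y - v))
      = (p - x') ⬝ᵥ (x' - u') + (q - u') ⬝ᵥ (u' - x') := by
    rw [tdot]
    have hv1 : ((x - x') - (u - u')) + s • Aᵀ.mulVec (y - v) = (p - x') - (q - u') := by
      rw [hp, hq, Matrix.mulVec_sub, smul_sub]
      module
    calc ((x - x') - (u - u')) ⬝ᵥ (x' - u') + s * (Aᵀ.mulVec (y - v) ⬝ᵥ (x' - u'))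
        = (((x - x') - (u - u')) + s • Aᵀ.mulVec (y - v)) ⬝ᵥ (x' - u') := by
          rw [add_dotProduct, smul_dotProduct, smul_eq_mul]
      _ = ((p - x') - (q - u')) ⬝ᵥ (x' - u') := by rw [hv1]
      _ = (p - x') ⬝ᵥ (x' - u') + (q - u') ⬝ᵥ (u' - x') := by
          rw [sub_dotProduct, show u' - x' = -(x' - u') from by abel,
            dotProduct_neg]
          ring
  -- variational inequalities
  have hu'nn : ∀ i, 0 ≤ u' i := fun i => le_max_right _ _
  have hx'nn : ∀ i, 0 ≤ x' i := fun i => le_max_right _ _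
  have hvi1 : 0 ≤ (p - x') ⬝ᵥ (x' - u') := by
    have h := projPos_vi p u' hu'nn
    rw [← hx'] at h
    rw [show x' - u' = -(u' - x') from by abel, dotProduct_neg]
    linarith
  have hvi2 : 0 ≤ (q - u') ⬝ᵥ (u' - x') := by
    have h := projPos_vi q x' hx'nn
    rw [← hu'] at h
    rw [show u' - x' = -(x' - u') from by abel, dotProduct_neg]
    linarith
  -- assemble
  have hfinal : psBil A s ((x, y) - (x', Y') - ((u, v) - (u', V'))) ((x', Y') - (u', V'))
      = 1/s * ((p - x') ⬝ᵥ (x' - u') + (q - u') ⬝ᵥ (u' - x')) := by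
    simp only [psBil, Prod.mk_sub_mk, Prod.fst, Prod.snd]
    rw [e1, e2, e3expand, ← e4, ← e3]
    field_simp
    ring
  rw [hfinal]
  have h1s : 0 < 1/s := by positivity
  nlinarith

lemma pdhg_fejer {A : Matrix (Fin m) (Fin n) ℝ} {b : Fin m → ℝ} {c : Fin n → ℝ} {s : ℝ}
    (hs : 0 < s) (z w : (Fin n → ℝ) × (Fin m → ℝ)) :
    PsSq A s (pdhgT A b c s z - pdhgT A b c s w)
      + PsSq A s ((z - pdhgT A b c s z) - (w - pdhgT A b c s w)) ≤ PsSq A s (z - w) := by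
  have hid : z - w = ((z - pdhgT A b c s z) - (w - pdhgT A b c s w))
      + (pdhgT A b c s z - pdhgT A b c s w) := by abel
  rw [hid, psSq_add]
  have hfirm := pdhg_firm (A := A) (b := b) (c := c) hs z w
  linarith

lemma psSq_neg (A : Matrix (Fin m) (Fin n) ℝ) (s : ℝ) (z : (Fin n → ℝ) × (Fin m → ℝ)) :
    PsSq A s (-z) = PsSq A s z := by
  simp only [PsSq, Prod.fst_neg, Prod.snd_neg, Matrix.mulVec_neg, neg_dotProduct,
    dotProduct_neg]
  ring

lemma psSq_upper {A : Matrix (Fin m) (Fin n) ℝ} {s : ℝ}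
    (z : (Fin n → ℝ) × (Fin m → ℝ)) :
    PsSq A s z ≤ (1/s + specNorm A) * (z.1 ⬝ᵥ z.1 + z.2 ⬝ᵥ z.2) := by
  have h1 : |A.mulVec z.1 ⬝ᵥ z.2| ≤ specNorm A * _root_.enorm z.1 * _root_.enorm z.2 := by
    calc |A.mulVec z.1 ⬝ᵥ z.2| ≤ _root_.enorm (A.mulVec z.1) * _root_.enorm z.2 := abs_dotProduct_le _ _
      _ ≤ specNorm A * _root_.enorm z.1 * _root_.enorm z.2 :=
        mul_le_mul_of_nonneg_right (enorm_mulVec_le A z.1) (enorm_nonneg _)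
  have h2 : 2 * (_root_.enorm z.1 * _root_.enorm z.2) ≤ z.1 ⬝ᵥ z.1 + z.2 ⬝ᵥ z.2 := by
    nlinarith [enorm_sq z.1, enorm_sq z.2, sq_nonneg (_root_.enorm z.1 - _root_.enorm z.2)]
  have h3 := specNorm_nonneg A
  have h4 := le_abs_self (A.mulVec z.1 ⬝ᵥ z.2)
  have h5 := mul_le_mul_of_nonneg_left h2 h3
  simp only [PsSq]
  nlinarith [h1, h4, h5]

lemma specNorm_lt {A : Matrix (Fin m) (Fin n) ℝ} {s : ℝ} (hs : 0 < s)
    (hsA : s * specNorm A < 1) : 0 < 1/s - specNorm A := by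
  have h1 : specNorm A < 1/s := by
    rw [lt_div_iff₀ hs]
    linarith [hsA, mul_comm s (specNorm A)]
  linarith

lemma psSq_nonneg {A : Matrix (Fin m) (Fin n) ℝ} {s : ℝ} (hs : 0 < s)
    (hsA : s * specNorm A < 1) (z : (Fin n → ℝ) × (Fin m → ℝ)) : 0 ≤ PsSq A s z := by
  have h1 := psSq_lower (A := A) (s := s) z
  have h2 := specNorm_lt hs hsA
  have h3 : 0 ≤ z.1 ⬝ᵥ z.1 + z.2 ⬝ᵥ z.2 :=
    add_nonneg (dotProduct_self_nonneg' _) (dotProduct_self_nonneg' _)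
  nlinarith

lemma fixed_of_opt {A : Matrix (Fin m) (Fin n) ℝ} {b : Fin m → ℝ} {c : Fin n → ℝ} {s : ℝ}
    (hs : 0 < s) {x : Fin n → ℝ} {y : Fin m → ℝ} (hxnn : ∀ i, 0 ≤ x i)
    (hAx : A.mulVec x = b) (hAty : ∀ j, Aᵀ.mulVec y j ≤ c j)
    (hobj : c ⬝ᵥ x = b ⬝ᵥ y) : pdhgT A b c s (x, y) = (x, y) := by
  have hcs : ∀ j, x j * (c j - Aᵀ.mulVec y j) = 0 := by
    have h1 : x ⬝ᵥ Aᵀ.mulVec y = b ⬝ᵥ y := by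
      rw [dotProduct_comm x, ← tdot, hAx]
    have hsum : ∑ j, x j * (c j - Aᵀ.mulVec y j) = 0 := by
      have : ∑ j, x j * (c j - Aᵀ.mulVec y j) = x ⬝ᵥ c - x ⬝ᵥ Aᵀ.mulVec y := by
        simp [dotProduct, mul_sub, Finset.sum_sub_distrib]
      rw [this, h1, dotProduct_comm x c, hobj]
      ring
    intro j
    exact (Finset.sum_eq_zero_iff_of_nonneg
      (fun j (_ : j ∈ Finset.univ) => mul_nonneg (hxnn j) (sub_nonneg.2 (hAty j)))).1
      hsum j (Finset.mem_univ j)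
  have hfst : projPos (x + s • Aᵀ.mulVec y - s • c) = x := by
    funext i
    simp only [projPos, Pi.add_apply, Pi.sub_apply, Pi.smul_apply, smul_eq_mul]
    rcases eq_or_lt_of_le (hxnn i) with h0 | hpos
    · rw [← h0]
      have : s * Aᵀ.mulVec y i - s * c i ≤ 0 := by
        have := hAty i
        nlinarith
      rw [max_eq_right (by linarith)]
    · have hzero : c i - Aᵀ.mulVec y i = 0 := by
        have := hcs i
        rcases mul_eq_zero.1 this with h | h
        · exact absurd h (ne_of_gt hpos)
        · exact h
      have : x i + s * Aᵀ.mulVec y i - s * c i = x i := by nlinarith [hzero]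
      rw [this, max_eq_left (hxnn i)]
  show (projPos (x + s • Aᵀ.mulVec y - s • c),
    y - s • A.mulVec ((2:ℝ) • projPos (x + s • Aᵀ.mulVec y - s • c) - x) + s • b) = (x, y)
  rw [hfst]
  have h2x : (2:ℝ) • x - x = x := by module
  rw [h2x, hAx]
  simp

lemma fixed_eqns {A : Matrix (Fin m) (Fin n) ℝ} {b : Fin m → ℝ} {c : Fin n → ℝ} {s : ℝ}
    (hs : 0 < s) {x : Fin n → ℝ} {y : Fin m → ℝ}
    (hfix : pdhgT A b c s (x, y) = (x, y)) :
    (∀ i, 0 ≤ x i) ∧ A.mulVec x = b ∧ (∀ j, Aᵀ.mulVec y j ≤ c j) ∧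
      (∀ j, x j * (c j - Aᵀ.mulVec y j) = 0) := by
  have hfst : projPos (x + s • Aᵀ.mulVec y - s • c) = x :=
    congrArg Prod.fst hfix
  have hsnd : y - s • A.mulVec ((2:ℝ) • projPos (x + s • Aᵀ.mulVec y - s • c) - x) + s • b
      = y := congrArg Prod.snd hfix
  have hxnn : ∀ i, 0 ≤ x i := by
    intro i
    have := congrFun hfst i
    simp only [projPos] at this
    rw [← this]
    exact le_max_right _ _
  have hAx : A.mulVec x = b := by
    rw [hfst] at hsnd
    have h2x : (2:ℝ) • x - x = x := by module
    rw [h2x] at hsnd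
    funext i
    have := congrFun hsnd i
    simp only [Pi.add_apply, Pi.sub_apply, Pi.smul_apply, smul_eq_mul] at this
    have : s * A.mulVec x i = s * b i := by linarith
    exact mul_left_cancel₀ (ne_of_gt hs) this
  have hpt : ∀ i, x i = max (x i + s * (Aᵀ.mulVec y i - c i)) 0 := by
    intro i
    have hthis := congrFun hfst i
    simp only [projPos, Pi.add_apply, Pi.sub_apply, Pi.smul_apply, smul_eq_mul] at hthis
    rw [show x i + s * ((Aᵀ.mulVec y) i - c i) = x i + s * (Aᵀ.mulVec y) i - s * c i
      from by ring]
    exact hthis.symm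
  have hkey : ∀ i, Aᵀ.mulVec y i ≤ c i ∧ x i * (c i - Aᵀ.mulVec y i) = 0 := by
    intro i
    have h := hpt i
    rcases le_or_gt 0 (x i + s * (Aᵀ.mulVec y i - c i)) with hc | hc
    · rw [max_eq_left hc] at h
      have hd : Aᵀ.mulVec y i - c i = 0 := by
        have : s * (Aᵀ.mulVec y i - c i) = 0 := by linarith
        rcases mul_eq_zero.1 this with h' | h'
        · exact absurd h' (ne_of_gt hs)
        · exact h'
      constructor
      · linarith
      · have : c i - Aᵀ.mulVec y i = 0 := by linarith
        rw [this, mul_zero]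
    · rw [max_eq_right hc.le] at h
      have hd : s * (Aᵀ.mulVec y i - c i) < 0 := by linarith
      have hd' : Aᵀ.mulVec y i - c i < 0 := by
        by_contra hcon
        push_neg at hcon
        nlinarith
      exact ⟨by linarith, by rw [h, zero_mul]⟩
  exact ⟨hxnn, hAx, fun j => (hkey j).1, fun j => (hkey j).2⟩

lemma saddle_of_fixed {A : Matrix (Fin m) (Fin n) ℝ} {b : Fin m → ℝ} {c : Fin n → ℝ} {s : ℝ}
    (hs : 0 < s) {zf : (Fin n → ℝ) × (Fin m → ℝ)}
    (hfix : pdhgT A b c s zf = zf) : isSaddle A b c zf := by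
  obtain ⟨x, y⟩ := zf
  obtain ⟨hxnn, hAx, hAty, hcs⟩ := fixed_eqns hs hfix
  have hlagr1 : ∀ y0, lagr A b c x y0 = c ⬝ᵥ x := by
    intro y0
    simp only [lagr, hAx]
    rw [dotProduct_comm y0 b]
    ring
  have hlagr2 : ∀ x0, lagr A b c x0 y
      = (∑ j, (c j - Aᵀ.mulVec y j) * x0 j) + b ⬝ᵥ y := by
    intro x0
    simp only [lagr]
    rw [Matrix.dotProduct_mulVec, ← Matrix.mulVec_transpose]
    simp [dotProduct, sub_mul, Finset.sum_sub_distrib]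
  refine ⟨hxnn, fun w hw => ⟨?_, ?_⟩⟩
  · rw [hlagr1, hlagr1]
  · rw [hlagr2 x, hlagr2 w.1]
    have h1 : ∑ j, (c j - Aᵀ.mulVec y j) * x j = 0 :=
      Finset.sum_eq_zero fun j _ => by rw [mul_comm]; exact hcs j
    have h2 : 0 ≤ ∑ j, (c j - Aᵀ.mulVec y j) * w.1 j :=
      Finset.sum_nonneg fun j _ => mul_nonneg (sub_nonneg.2 (hAty j)) (hw j)
    linarith

lemma pdhgT_cont (A : Matrix (Fin m) (Fin n) ℝ) (b : Fin m → ℝ) (c : Fin n → ℝ) (s : ℝ) :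
    Continuous (pdhgT A b c s) := by
  have hmul : Continuous fun v : Fin n → ℝ => A.mulVec v := by
    have h : (fun v : Fin n → ℝ => A.mulVec v) = fun v => A.mulVecLin v := by
      funext v; rfl
    rw [h]
    exact A.mulVecLin.continuous_of_finiteDimensional
  have hmulT : Continuous fun v : Fin m → ℝ => Aᵀ.mulVec v := by
    have h : (fun v : Fin m → ℝ => Aᵀ.mulVec v) = fun v => Aᵀ.mulVecLin v := by
      funext v; rfl
    rw [h]
    exact Aᵀ.mulVecLin.continuous_of_finiteDimensional
  have hproj : Continuous fun v : Fin n → ℝ => projPos v :=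
    continuous_pi fun i => ((continuous_apply i).max continuous_const)
  have hX : Continuous fun z : (Fin n → ℝ) × (Fin m → ℝ) =>
      projPos (z.1 + s • Aᵀ.mulVec z.2 - s • c) :=
    hproj.comp ((continuous_fst.add ((hmulT.comp continuous_snd).const_smul s)).sub
      continuous_const)
  show Continuous fun z : (Fin n → ℝ) × (Fin m → ℝ) =>
    (projPos (z.1 + s • Aᵀ.mulVec z.2 - s • c),
      z.2 - s • A.mulVec ((2:ℝ) • projPos (z.1 + s • Aᵀ.mulVec z.2 - s • c) - z.1) + s • b)
  exact hX.prodMk ((continuous_snd.sub ((hmul.comp ((hX.const_smul (2:ℝ)).sub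
    continuous_fst)).const_smul s)).add continuous_const)

lemma coord_sq_le_fst (d : (Fin n → ℝ) × (Fin m → ℝ)) (i : Fin n) :
    d.1 i * d.1 i ≤ d.1 ⬝ᵥ d.1 + d.2 ⬝ᵥ d.2 := by
  have h1 : d.1 i * d.1 i ≤ d.1 ⬝ᵥ d.1 :=
    Finset.single_le_sum (fun j (_ : j ∈ Finset.univ) => mul_self_nonneg (d.1 j))
      (Finset.mem_univ i)
  have h2 := dotProduct_self_nonneg' d.2
  linarith

lemma coord_sq_le_snd (d : (Fin n → ℝ) × (Fin m → ℝ)) (i : Fin m) :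
    d.2 i * d.2 i ≤ d.1 ⬝ᵥ d.1 + d.2 ⬝ᵥ d.2 := by
  have h1 : d.2 i * d.2 i ≤ d.2 ⬝ᵥ d.2 :=
    Finset.single_le_sum (fun j (_ : j ∈ Finset.univ) => mul_self_nonneg (d.2 j))
      (Finset.mem_univ i)
  have h2 := dotProduct_self_nonneg' d.1
  linarith

lemma tendsto_of_sumsq {f : ℕ → (Fin n → ℝ) × (Fin m → ℝ)}
    (hS : Filter.Tendsto (fun k => (f k).1 ⬝ᵥ (f k).1 + (f k).2 ⬝ᵥ (f k).2)
      Filter.atTop (nhds 0)) : Filter.Tendsto f Filter.atTop (nhds 0) := by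
  have hsqrt : Filter.Tendsto
      (fun k => Real.sqrt ((f k).1 ⬝ᵥ (f k).1 + (f k).2 ⬝ᵥ (f k).2))
      Filter.atTop (nhds 0) := by
    have := (Real.continuous_sqrt.tendsto' 0 0 (by simp)).comp hS
    exact this
  have hcoord1 : ∀ i, Filter.Tendsto (fun k => (f k).1 i) Filter.atTop (nhds 0) := by
    intro i
    have hb : ∀ k, |(f k).1 i| ≤ Real.sqrt ((f k).1 ⬝ᵥ (f k).1 + (f k).2 ⬝ᵥ (f k).2) := by
      intro k
      rw [← Real.sqrt_mul_self_eq_abs]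
      exact Real.sqrt_le_sqrt (coord_sq_le_fst _ i)
    refine tendsto_of_tendsto_of_tendsto_of_le_of_le (g := fun k =>
      -Real.sqrt ((f k).1 ⬝ᵥ (f k).1 + (f k).2 ⬝ᵥ (f k).2)) (h := fun k =>
      Real.sqrt ((f k).1 ⬝ᵥ (f k).1 + (f k).2 ⬝ᵥ (f k).2)) ?_ ?_ ?_ ?_
    · simpa using hsqrt.neg
    · exact hsqrt
    · intro k
      dsimp only
      obtain ⟨hl, hr⟩ := abs_le.1 (hb k)
      linarith
    · intro k
      dsimp only
      obtain ⟨hl, hr⟩ := abs_le.1 (hb k)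
      linarith
  have hcoord2 : ∀ i, Filter.Tendsto (fun k => (f k).2 i) Filter.atTop (nhds 0) := by
    intro i
    have hb : ∀ k, |(f k).2 i| ≤ Real.sqrt ((f k).1 ⬝ᵥ (f k).1 + (f k).2 ⬝ᵥ (f k).2) := by
      intro k
      rw [← Real.sqrt_mul_self_eq_abs]
      exact Real.sqrt_le_sqrt (coord_sq_le_snd _ i)
    refine tendsto_of_tendsto_of_tendsto_of_le_of_le (g := fun k =>
      -Real.sqrt ((f k).1 ⬝ᵥ (f k).1 + (f k).2 ⬝ᵥ (f k).2)) (h := fun k =>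
      Real.sqrt ((f k).1 ⬝ᵥ (f k).1 + (f k).2 ⬝ᵥ (f k).2)) ?_ ?_ ?_ ?_
    · simpa using hsqrt.neg
    · exact hsqrt
    · intro k
      dsimp only
      obtain ⟨hl, hr⟩ := abs_le.1 (hb k)
      linarith
    · intro k
      dsimp only
      obtain ⟨hl, hr⟩ := abs_le.1 (hb k)
      linarith
  have h1 : Filter.Tendsto (fun k => (f k).1) Filter.atTop (nhds 0) :=
    tendsto_pi_nhds.2 fun i => by simpa using hcoord1 i
  have h2 : Filter.Tendsto (fun k => (f k).2) Filter.atTop (nhds 0) :=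
    tendsto_pi_nhds.2 fun i => by simpa using hcoord2 i
  have := h1.prodMk_nhds h2
  exact this

lemma tendsto_sumsq_of_tendsto {f : ℕ → (Fin n → ℝ) × (Fin m → ℝ)}
    {l : (Fin n → ℝ) × (Fin m → ℝ)} (hf : Filter.Tendsto f Filter.atTop (nhds l)) :
    Filter.Tendsto (fun k => (f k - l).1 ⬝ᵥ (f k - l).1 + (f k - l).2 ⬝ᵥ (f k - l).2)
      Filter.atTop (nhds 0) := by
  have h1 : Filter.Tendsto (fun k => (f k).1) Filter.atTop (nhds l.1) :=
    (continuous_fst.tendsto l).comp hf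
  have h2 : Filter.Tendsto (fun k => (f k).2) Filter.atTop (nhds l.2) :=
    (continuous_snd.tendsto l).comp hf
  have hc1 : ∀ i, Filter.Tendsto (fun k => ((f k).1 i - l.1 i) * ((f k).1 i - l.1 i))
      Filter.atTop (nhds 0) := by
    intro i
    have hti := (tendsto_pi_nhds.1 h1 i).sub (tendsto_const_nhds (x := l.1 i))
    simp only [sub_self] at hti
    simpa using hti.mul hti
  have hc2 : ∀ i, Filter.Tendsto (fun k => ((f k).2 i - l.2 i) * ((f k).2 i - l.2 i))
      Filter.atTop (nhds 0) := by
    intro i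
    have hti := (tendsto_pi_nhds.1 h2 i).sub (tendsto_const_nhds (x := l.2 i))
    simp only [sub_self] at hti
    simpa using hti.mul hti
  have hs1 : Filter.Tendsto (fun k => ∑ i, ((f k).1 i - l.1 i) * ((f k).1 i - l.1 i))
      Filter.atTop (nhds 0) := by
    have := tendsto_finset_sum Finset.univ (fun i _ => hc1 i)
    simpa using this
  have hs2 : Filter.Tendsto (fun k => ∑ i, ((f k).2 i - l.2 i) * ((f k).2 i - l.2 i))
      Filter.atTop (nhds 0) := by
    have := tendsto_finset_sum Finset.univ (fun i _ => hc2 i)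
    simpa using this
  have := hs1.add hs2
  simp only [add_zero] at this
  convert this using 2 with k
  rfl

end PDHGAnalysis

/-- **Behavior of PDHG when both primal and dual are feasible** (Theorem 6(a)):
the iterates converge to a primal-dual optimal solution `z*` and the infimal
displacement vector satisfies `v = T(z*) − z* = 0`. -/
theorem pdhg_both_feasible {m n : ℕ} (A : Matrix (Fin m) (Fin n) ℝ)
    (b : Fin m → ℝ) (c : Fin n → ℝ) (s : ℝ) (hs : 0 < s) (hsA : s * specNorm A < 1)
    (hprimal : ∃ x : Fin n → ℝ, (∀ i, 0 ≤ x i) ∧ A.mulVec x = b)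
    (hdual : ∃ y : Fin m → ℝ, ∀ j, Aᵀ.mulVec y j ≤ c j)
    (z : ℕ → (Fin n → ℝ) × (Fin m → ℝ))
    (hz : ∀ k, z (k + 1) = pdhgT A b c s (z k))
    (v : (Fin n → ℝ) × (Fin m → ℝ)) (hv : isIDV A s (pdhgT A b c s) v) :
    ∃ zst : (Fin n → ℝ) × (Fin m → ℝ), isSaddle A b c zst ∧
      Filter.Tendsto z Filter.atTop (nhds zst) ∧
      v = pdhgT A b c s zst - zst ∧ v = 0 := by
  classical
  obtain ⟨xo, yo, hxo, hAxo, hAtyo, hobj⟩ := exists_optimal_pair A b c hprimal hdual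
  have hα : 0 < 1/s - specNorm A := specNorm_lt hs hsA
  set w0 : (Fin n → ℝ) × (Fin m → ℝ) := (xo, yo) with hw0
  have hfixo : pdhgT A b c s w0 = w0 := fixed_of_opt hs hxo hAxo hAtyo hobj
  -- Fejér inequality with respect to any fixed point
  have hkey : ∀ wf : (Fin n → ℝ) × (Fin m → ℝ), pdhgT A b c s wf = wf → ∀ k,
      PsSq A s (z (k+1) - z k) + PsSq A s (z (k+1) - wf) ≤ PsSq A s (z k - wf) := by
    intro wf hwf k
    have h := pdhg_fejer (A := A) (b := b) (c := c) hs (z k) wf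
    rw [hwf, ← hz k, sub_self, sub_zero] at h
    have hneg : PsSq A s (z k - z (k+1)) = PsSq A s (z (k+1) - z k) := by
      rw [show z k - z (k+1) = -(z (k+1) - z k) from by abel, psSq_neg]
    rw [hneg] at h
    linarith
  set a : ℕ → ℝ := fun k => PsSq A s (z k - w0) with ha
  have hann : ∀ k, 0 ≤ a k := fun k => psSq_nonneg hs hsA _
  have hstepnn : ∀ k, 0 ≤ PsSq A s (z (k+1) - z k) := fun k => psSq_nonneg hs hsA _
  have hanti : Antitone a := antitone_nat_of_succ_le fun k => by
    have h1 := hkey w0 hfixo k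
    have h2 := hstepnn k
    show PsSq A s (z (k+1) - w0) ≤ PsSq A s (z k - w0)
    linarith
  -- step differences tend to zero
  have hconv : Filter.Tendsto a Filter.atTop (nhds (⨅ k, a k)) :=
    tendsto_atTop_ciInf hanti ⟨0, fun x ⟨k, hk⟩ => hk ▸ hann k⟩
  have hconv' : Filter.Tendsto (fun k => a (k + 1)) Filter.atTop (nhds (⨅ k, a k)) :=
    hconv.comp (Filter.tendsto_add_atTop_nat 1)
  have hdiffconv : Filter.Tendsto (fun k => a k - a (k + 1)) Filter.atTop (nhds 0) := by
    have := hconv.sub hconv'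
    simpa using this
  have hstep0 : Filter.Tendsto (fun k => PsSq A s (z (k+1) - z k)) Filter.atTop (nhds 0) :=
    squeeze_zero hstepnn (fun k => by
      have h1 := hkey w0 hfixo k
      show PsSq A s (z (k+1) - z k) ≤ PsSq A s (z k - w0) - PsSq A s (z (k+1) - w0)
      linarith) hdiffconv
  have hstepz : Filter.Tendsto (fun k => z (k+1) - z k) Filter.atTop (nhds 0) := by
    apply tendsto_of_sumsq
    apply squeeze_zero
    · intro k
      exact add_nonneg (dotProduct_self_nonneg' _) (dotProduct_self_nonneg' _)
    · intro k
      show (z (k+1) - z k).1 ⬝ᵥ (z (k+1) - z k).1 + (z (k+1) - z k).2 ⬝ᵥ (z (k+1) - z k).2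
        ≤ (1/(1/s - specNorm A)) * PsSq A s (z (k+1) - z k)
      have hl := psSq_lower (A := A) (s := s) (z (k+1) - z k)
      have h1 : ((z (k+1) - z k).1 ⬝ᵥ (z (k+1) - z k).1
          + (z (k+1) - z k).2 ⬝ᵥ (z (k+1) - z k).2) * (1/s - specNorm A)
          ≤ PsSq A s (z (k+1) - z k) := by nlinarith [hl]
      have h2 := (le_div_iff₀ hα).2 h1
      calc (z (k+1) - z k).1 ⬝ᵥ (z (k+1) - z k).1
            + (z (k+1) - z k).2 ⬝ᵥ (z (k+1) - z k).2
          ≤ PsSq A s (z (k+1) - z k) / (1/s - specNorm A) := h2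
        _ = (1/(1/s - specNorm A)) * PsSq A s (z (k+1) - z k) := by ring
    · have := hstep0.const_mul (1/(1/s - specNorm A))
      simpa using this
  -- bounded iterates
  set R : ℝ := Real.sqrt (a 0 / (1/s - specNorm A)) with hR
  have hball : ∀ k, z k ∈ Metric.closedBall w0 R := by
    intro k
    rw [Metric.mem_closedBall]
    have hSb : (z k - w0).1 ⬝ᵥ (z k - w0).1 + (z k - w0).2 ⬝ᵥ (z k - w0).2
        ≤ a 0 / (1/s - specNorm A) := by
      have hl := psSq_lower (A := A) (s := s) (z k - w0)
      have hak : PsSq A s (z k - w0) ≤ a 0 := hanti (Nat.zero_le k)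
      rw [le_div_iff₀ hα]
      nlinarith
    have hcoord : ∀ t : ℝ, t * t ≤ a 0 / (1/s - specNorm A) → |t| ≤ R := by
      intro t ht
      rw [hR, ← Real.sqrt_mul_self_eq_abs]
      exact Real.sqrt_le_sqrt ht
    rw [Prod.dist_eq]
    have hRnn : 0 ≤ R := Real.sqrt_nonneg _
    refine sup_le ?_ ?_
    · rw [dist_pi_le_iff hRnn]
      intro i
      rw [Real.dist_eq]
      refine hcoord _ (le_trans ?_ hSb)
      have := coord_sq_le_fst (z k - w0) i
      simpa using this
    · rw [dist_pi_le_iff hRnn]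
      intro i
      rw [Real.dist_eq]
      refine hcoord _ (le_trans ?_ hSb)
      have := coord_sq_le_snd (z k - w0) i
      simpa using this
  obtain ⟨zh, _, φ, hφ, hlim1⟩ :=
    tendsto_subseq_of_bounded (Metric.isBounded_closedBall (x := w0) (r := R)) hball
  -- the cluster point is a fixed point
  have hlim2 : Filter.Tendsto (fun j => z (φ j + 1)) Filter.atTop (nhds zh) := by
    have hsub : Filter.Tendsto (fun j => z (φ j + 1) - z (φ j)) Filter.atTop (nhds 0) :=
      hstepz.comp hφ.tendsto_atTop
    have := hlim1.add hsub
    simp only [add_zero] at this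
    refine this.congr fun j => ?_
    simp [Function.comp]
  have hlim3 : Filter.Tendsto (fun j => pdhgT A b c s (z (φ j))) Filter.atTop
      (nhds (pdhgT A b c s zh)) :=
    ((pdhgT_cont A b c s).tendsto zh).comp hlim1
  have hfixh : pdhgT A b c s zh = zh := by
    have : Filter.Tendsto (fun j => z (φ j + 1)) Filter.atTop (nhds (pdhgT A b c s zh)) := by
      refine hlim3.congr fun j => ?_
      rw [hz (φ j)]
    exact (tendsto_nhds_unique this hlim2)
  -- the whole sequence converges to zh
  set bq : ℕ → ℝ := fun k => PsSq A s (z k - zh) with hbq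
  have hbnn : ∀ k, 0 ≤ bq k := fun k => psSq_nonneg hs hsA _
  have hbanti : Antitone bq := antitone_nat_of_succ_le fun k => by
    have h1 := hkey zh hfixh k
    have h2 := hstepnn k
    show PsSq A s (z (k+1) - zh) ≤ PsSq A s (z k - zh)
    linarith
  have hbphi : Filter.Tendsto (fun j => bq (φ j)) Filter.atTop (nhds 0) := by
    have hS := tendsto_sumsq_of_tendsto (f := fun j => z (φ j)) (l := zh) hlim1
    refine squeeze_zero (g := fun j => (1/s + specNorm A)
        * (((z (φ j) - zh).1 ⬝ᵥ (z (φ j) - zh).1)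
          + ((z (φ j) - zh).2 ⬝ᵥ (z (φ j) - zh).2)))
      (fun j => hbnn _) (fun j => ?_) ?_
    · show PsSq A s (z (φ j) - zh) ≤ (1/s + specNorm A)
        * (((z (φ j) - zh).1 ⬝ᵥ (z (φ j) - zh).1) + ((z (φ j) - zh).2 ⬝ᵥ (z (φ j) - zh).2))
      exact psSq_upper _
    · have := hS.const_mul (1/s + specNorm A)
      simpa using this
  have hb0 : Filter.Tendsto bq Filter.atTop (nhds 0) := by
    rw [Metric.tendsto_atTop]
    intro ε hε
    obtain ⟨J, hJ⟩ := (Metric.tendsto_atTop.1 hbphi) ε hε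
    refine ⟨φ J, fun k hk => ?_⟩
    have h1 : bq k ≤ bq (φ J) := hbanti hk
    have h2 := hJ J le_rfl
    rw [Real.dist_eq, sub_zero] at h2 ⊢
    rw [abs_of_nonneg (hbnn _)] at h2 ⊢
    linarith
  have hzconv : Filter.Tendsto z Filter.atTop (nhds zh) := by
    have hd : Filter.Tendsto (fun k => z k - zh) Filter.atTop (nhds 0) := by
      apply tendsto_of_sumsq
      refine squeeze_zero (g := fun k => (1/(1/s - specNorm A)) * bq k) (fun k =>
        add_nonneg (dotProduct_self_nonneg' _) (dotProduct_self_nonneg' _))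
        (fun k => ?_) ?_
      · show (z k - zh).1 ⬝ᵥ (z k - zh).1 + (z k - zh).2 ⬝ᵥ (z k - zh).2
          ≤ (1/(1/s - specNorm A)) * bq k
        have hl := psSq_lower (A := A) (s := s) (z k - zh)
        have h1 : ((z k - zh).1 ⬝ᵥ (z k - zh).1 + (z k - zh).2 ⬝ᵥ (z k - zh).2)
            * (1/s - specNorm A) ≤ PsSq A s (z k - zh) := by nlinarith [hl]
        have h2 := (le_div_iff₀ hα).2 h1
        calc (z k - zh).1 ⬝ᵥ (z k - zh).1 + (z k - zh).2 ⬝ᵥ (z k - zh).2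
            ≤ PsSq A s (z k - zh) / (1/s - specNorm A) := h2
          _ = (1/(1/s - specNorm A)) * PsSq A s (z k - zh) := by ring
      · have := hb0.const_mul (1/(1/s - specNorm A))
        simpa using this
    have := hd.add (tendsto_const_nhds (x := zh))
    simp only [zero_add] at this
    refine this.congr fun k => ?_
    abel
  -- conclusion
  have hsaddle : isSaddle A b c zh := saddle_of_fixed hs hfixh
  have hv0 : v = 0 := by
    have h0mem : (0 : (Fin n → ℝ) × (Fin m → ℝ)) ∈
        closure {w | ∃ z', w = pdhgT A b c s z' - z'} := by
      apply subset_closure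
      exact ⟨zh, by rw [hfixh, sub_self]⟩
    have hle := hv.2 0 h0mem
    have h0 : PsNorm A s (0 : (Fin n → ℝ) × (Fin m → ℝ)) = 0 := by
      have : PsSq A s (0 : (Fin n → ℝ) × (Fin m → ℝ)) = 0 := by
        simp [PsSq, Matrix.mulVec_zero, dotProduct]
      rw [PsNorm, this, Real.sqrt_zero]
    rw [h0] at hle
    have hPs0 : PsSq A s v ≤ 0 := by
      by_contra hcon
      push_neg at hcon
      have : 0 < PsNorm A s v := Real.sqrt_pos.2 hcon
      linarith
    have hl := psSq_lower (A := A) (s := s) v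
    have hSle : v.1 ⬝ᵥ v.1 + v.2 ⬝ᵥ v.2 ≤ 0 := by nlinarith
    have hv1 : v.1 = 0 := eq_zero_of_dotProduct_self _ (by
      have := dotProduct_self_nonneg' v.2; linarith)
    have hv2 : v.2 = 0 := eq_zero_of_dotProduct_self _ (by
      have := dotProduct_self_nonneg' v.1; linarith)
    have : v = (v.1, v.2) := rfl
    rw [this, hv1, hv2]
    rfl
  refine ⟨zh, hsaddle, hzconv, ?_, hv0⟩
  rw [hfixh, sub_self, hv0]
end Farkas
end
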